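/- For the ladder graph LG_n = P_2 □ P_n with n ≥ 2, the signed Roman domination number satisfies γ_SR(LG_n) = ⌊(n+2)/2⌋ + 1. -/
import Mathlib


open scoped Classical
open Finset SimpleGraph

/-- A signed Roman dominating function on `G`: values in {-1,1,2}, every closed
neighborhood sums to at least 1, and every vertex valued -1 has a neighbor valued 2. -/
def IsSRDF {V : Type*} [Fintype V] (G : SimpleGraph V) (f : V → ℤ) : Prop :=
  (∀ v, f v = -1 ∨ f v = 1 ∨ f v = 2) ∧
  (∀ u, 1 ≤ f u + ∑ v ∈ Finset.univ.filter (G.Adj u), f v) ∧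
  (∀ u, f u = -1 → ∃ v, G.Adj u v ∧ f v = 2)

/-- The signed Roman domination number: minimum weight of an SRDF. -/
noncomputable def gammaSR {V : Type*} [Fintype V] (G : SimpleGraph V) : ℤ :=
  sInf {w | ∃ f, IsSRDF G f ∧ ∑ v, f v = w}

/-- The ladder graph `P₂ □ Pₙ`. -/
def ladderGraph (n : ℕ) : SimpleGraph (Fin 2 × Fin n) :=
  (SimpleGraph.pathGraph 2).boxProd (SimpleGraph.pathGraph n)

/-- The circular ladder graph `P₂ □ Cₙ`. -/
def circLadder (n : ℕ) : SimpleGraph (Fin 2 × Fin n) :=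
  (SimpleGraph.pathGraph 2).boxProd (SimpleGraph.cycleGraph n)


def colsL : List (ℤ × ℤ) := [(-1,-1),(-1,1),(-1,2),(1,-1),(1,1),(1,2),(2,-1),(2,1),(2,2)]

def Ok3 (p c x : ℤ × ℤ) : Prop :=
  1 ≤ c.1 + c.2 + p.1 + x.1 ∧ 1 ≤ c.1 + c.2 + p.2 + x.2 ∧
  (c.1 = -1 → p.1 = 2 ∨ x.1 = 2 ∨ c.2 = 2) ∧
  (c.2 = -1 → p.2 = 2 ∨ x.2 = 2 ∨ c.1 = 2)

instance (p c x : ℤ × ℤ) : Decidable (Ok3 p c x) := by unfold Ok3; infer_instance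
def Ktab (p c : ℤ × ℤ) : ℤ :=
  if p = (-1, -1) then (if c = (-1, -1) then 12 else if c = (-1, 1) then 12 else if c = (-1, 2) then 12 else if c = (1, -1) then 12 else if c = (1, 1) then 3 else if c = (1, 2) then 4 else if c = (2, -1) then 12 else if c = (2, 1) then 4 else if c = (2, 2) then 5 else 12) else
  if p = (-1, 1) then (if c = (-1, -1) then -1 else if c = (-1, 1) then 2 else if c = (-1, 2) then 4 else if c = (1, -1) then 3 else if c = (1, 1) then 6 else if c = (1, 2) then 8 else if c = (2, -1) then 4 else if c = (2, 1) then 4 else if c = (2, 2) then 6 else 12) else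
  if p = (-1, 2) then (if c = (-1, -1) then -1 else if c = (-1, 1) then 3 else if c = (-1, 2) then 5 else if c = (1, -1) then 3 else if c = (1, 1) then 4 else if c = (1, 2) then 6 else if c = (2, -1) then 5 else if c = (2, 1) then 6 else if c = (2, 2) then 8 else 12) else
  if p = (1, -1) then (if c = (-1, -1) then -1 else if c = (-1, 1) then 3 else if c = (-1, 2) then 4 else if c = (1, -1) then 2 else if c = (1, 1) then 6 else if c = (1, 2) then 4 else if c = (2, -1) then 4 else if c = (2, 1) then 8 else if c = (2, 2) then 6 else 12) else
  if p = (1, 1) then (if c = (-1, -1) then -2 else if c = (-1, 1) then 2 else if c = (-1, 2) then 4 else if c = (1, -1) then 2 else if c = (1, 1) then 6 else if c = (1, 2) then 8 else if c = (2, -1) then 4 else if c = (2, 1) then 8 else if c = (2, 2) then 10 else 12) else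
  if p = (1, 2) then (if c = (-1, -1) then -1 else if c = (-1, 1) then 3 else if c = (-1, 2) then 5 else if c = (1, -1) then 3 else if c = (1, 1) then 7 else if c = (1, 2) then 9 else if c = (2, -1) then 5 else if c = (2, 1) then 9 else if c = (2, 2) then 11 else 12) else
  if p = (2, -1) then (if c = (-1, -1) then -1 else if c = (-1, 1) then 3 else if c = (-1, 2) then 5 else if c = (1, -1) then 3 else if c = (1, 1) then 4 else if c = (1, 2) then 6 else if c = (2, -1) then 5 else if c = (2, 1) then 6 else if c = (2, 2) then 8 else 12) else
  if p = (2, 1) then (if c = (-1, -1) then -1 else if c = (-1, 1) then 3 else if c = (-1, 2) then 5 else if c = (1, -1) then 3 else if c = (1, 1) then 7 else if c = (1, 2) then 9 else if c = (2, -1) then 5 else if c = (2, 1) then 9 else if c = (2, 2) then 11 else 12) else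
  if p = (2, 2) then (if c = (-1, -1) then 0 else if c = (-1, 1) then 4 else if c = (-1, 2) then 6 else if c = (1, -1) then 4 else if c = (1, 1) then 8 else if c = (1, 2) then 10 else if c = (2, -1) then 6 else if c = (2, 1) then 10 else if c = (2, 2) then 12 else 12) else
  if p = (0, 0) then (if c = (-1, -1) then -5 else if c = (-1, 1) then -1 else if c = (-1, 2) then 1 else if c = (1, -1) then -1 else if c = (1, 1) then 3 else if c = (1, 2) then 5 else if c = (2, -1) then 1 else if c = (2, 1) then 5 else if c = (2, 2) then 7 else 12) else 12

lemma condA : ∀ c ∈ colsL, Ktab (0,0) c ≤ 2*(c.1+c.2) - 1 := by decide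

lemma condB : ∀ p ∈ ((0,0) :: colsL), ∀ c ∈ colsL, ∀ x ∈ colsL,
    Ok3 p c x → Ktab c x ≤ Ktab p c + 2*(x.1+x.2) - 1 := by decide

lemma condC : ∀ p ∈ colsL, ∀ c ∈ colsL, Ok3 p c (0,0) → 3 ≤ Ktab p c := by decide

lemma lb_aux (C : ℕ → ℤ × ℤ) :
    ∀ n, 1 ≤ n → (∀ i < n, C i ∈ colsL) →
    (∀ i, i + 1 < n → Ok3 (if i = 0 then (0,0) else C (i-1)) (C i) (C (i+1))) →
    (n : ℤ) + Ktab (if n - 1 = 0 then (0,0) else C (n-2)) (C (n-1))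
      ≤ 2 * ∑ i ∈ Finset.range n, ((C i).1 + (C i).2) := by
  intro n
  induction n with
  | zero => omega
  | succ n ih =>
    intro _ hval hok
    rcases Nat.eq_or_lt_of_le (Nat.one_le_iff_ne_zero.mpr (by omega) : 1 ≤ n + 1) with h1 | h1
    · -- n = 0
      have hn0 : n = 0 := by omega
      subst hn0
      simp only [Finset.sum_range_succ, Finset.sum_range_zero, zero_add]
      have := condA (C 0) (hval 0 (by omega))
      simp only [show (1:ℕ) - 1 = 0 from rfl, if_pos rfl]
      push_cast
      omega
    · -- n ≥ 1
      have hn1 : 1 ≤ n := by omega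
      have ihh := ih hn1 (fun i hi => hval i (by omega)) (fun i hi => hok i (by omega))
      rw [Finset.sum_range_succ]
      -- apply condB with p = (if n-1 = 0 then sent else C (n-2)), c = C (n-1), x = C n
      have hp : (if n - 1 = 0 then ((0:ℤ),(0:ℤ)) else C (n-2)) ∈ ((0,0) :: colsL) := by
        by_cases h : n - 1 = 0
        · simp [h]
        · simp only [if_neg h]
          exact List.mem_cons_of_mem _ (hval (n-2) (by omega))
      have hc : C (n-1) ∈ colsL := hval (n-1) (by omega)
      have hx : C n ∈ colsL := hval n (by omega)
      have hok3 : Ok3 (if n - 1 = 0 then (0,0) else C (n-2)) (C (n-1)) (C n) := by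
        have := hok (n-1) (by omega)
        have he : n - 1 + 1 = n := by omega
        rw [he] at this
        by_cases h : n - 1 = 0
        · rw [if_pos (by omega)] at this; rw [if_pos h]; exact this
        · rw [if_neg (by omega)] at this; rw [if_neg h]
          have : Ok3 (C (n-1-1)) (C (n-1)) (C n) := this
          have he2 : n - 1 - 1 = n - 2 := by omega
          rwa [he2] at this
      have hB := condB _ hp _ hc _ hx hok3
      have he3 : n + 1 - 1 = n := by omega
      have he4 : n + 1 - 2 = n - 1 := by omega
      rw [he3, he4]
      have : ¬ (n = 0) := by omega
      rw [if_neg this]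
      push_cast
      push_cast at ihh
      omega

def orow : Fin 2 → Fin 2 := fun r => ⟨1 - r.val, by omega⟩

lemma ladder_adj {n : ℕ} (a b : Fin 2) (i j : Fin n) :
    (ladderGraph n).Adj (a,i) (b,j) ↔
      (a = b ∧ ((i:ℕ)+1 = j ∨ (j:ℕ)+1 = i)) ∨ (i = j ∧ a ≠ b) := by
  have ha := a.isLt; have hb := b.isLt
  show ((pathGraph 2).boxProd (pathGraph n)).Adj (a,i) (b,j) ↔ _
  simp only [SimpleGraph.boxProd_adj, pathGraph_adj, Fin.ext_iff, ne_eq]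
  omega

lemma sum_val_eq {n : ℕ} (k : ℕ) (g : Fin n → ℤ) :
    (∑ j : Fin n, if (j : ℕ) = k then g j else 0) = if h : k < n then g ⟨k, h⟩ else 0 := by
  split
  · next h =>
    rw [Finset.sum_eq_single_of_mem (⟨k,h⟩ : Fin n) (Finset.mem_univ _)]
    · simp
    · intro j _ hne
      rw [if_neg]
      intro hv
      exact hne (Fin.ext hv)
  · next h =>
    apply Finset.sum_eq_zero
    intro j _
    rw [if_neg]
    intro hv
    exact h (hv ▸ j.isLt)

lemma ite_or_split {P Q : Prop} [Decidable P] [Decidable Q] (h : ¬(P ∧ Q)) (x : ℤ) :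
    (if P ∨ Q then x else 0) = (if P then x else 0) + (if Q then x else 0) := by
  by_cases hp : P <;> by_cases hq : Q <;> simp [hp, hq]
  exact absurd ⟨hp, hq⟩ h

lemma nbrSum {n : ℕ} (f : Fin 2 × Fin n → ℤ) (r : Fin 2) (i : Fin n) :
    ∑ v ∈ Finset.univ.filter ((ladderGraph n).Adj (r,i)), f v
      = f (orow r, i) + (if h : (i:ℕ)+1 < n then f (r, ⟨(i:ℕ)+1, h⟩) else 0)
        + (if 0 < (i:ℕ) then f (r, ⟨(i:ℕ)-1, lt_of_le_of_lt (Nat.sub_le _ _) i.isLt⟩) else 0) := by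
  rw [Finset.sum_filter, Fintype.sum_prod_type, Fin.sum_univ_two]
  have hsame : ∀ (s : Fin 2), s = r →
      (∑ j : Fin n, if (ladderGraph n).Adj (r,i) (s,j) then f (s,j) else 0)
        = (if h : (i:ℕ)+1 < n then f (r, ⟨(i:ℕ)+1, h⟩) else 0)
          + (if 0 < (i:ℕ) then f (r, ⟨(i:ℕ)-1, lt_of_le_of_lt (Nat.sub_le _ _) i.isLt⟩) else 0) := by
    rintro s rfl
    by_cases h2 : 0 < (i:ℕ)
    · have : ∀ j : Fin n, (if (ladderGraph n).Adj (s,i) (s,j) then f (s,j) else 0)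
          = (if (j:ℕ) = (i:ℕ)+1 then f (s,j) else 0) + (if (j:ℕ) = (i:ℕ)-1 then f (s,j) else 0) := by
        intro j
        rw [show ((ladderGraph n).Adj (s,i) (s,j)) ↔ ((j:ℕ) = (i:ℕ)+1 ∨ (j:ℕ) = (i:ℕ)-1) by
          have := i.isLt; have := j.isLt
          rw [ladder_adj]
          simp only [ne_eq, Fin.ext_iff, eq_self_iff_true, true_and, not_true, and_false, or_false]
          omega]
        by_cases hA : (j:ℕ) = (i:ℕ)+1
        · rw [if_pos (Or.inl hA), if_pos hA, if_neg (by omega), add_zero]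
        · by_cases hB : (j:ℕ) = (i:ℕ)-1
          · rw [if_pos (Or.inr hB), if_neg hA, if_pos hB, zero_add]
          · rw [if_neg (by tauto), if_neg hA, if_neg hB, add_zero]
      rw [Finset.sum_congr rfl (fun j _ => this j), Finset.sum_add_distrib,
        sum_val_eq, sum_val_eq, if_pos h2, dif_pos (lt_of_le_of_lt (Nat.sub_le _ _) i.isLt : (i:ℕ)-1 < n)]
    · have : ∀ j : Fin n, (if (ladderGraph n).Adj (s,i) (s,j) then f (s,j) else 0)
          = (if (j:ℕ) = (i:ℕ)+1 then f (s,j) else 0) := by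
        intro j
        congr 1
        have := i.isLt; have := j.isLt
        rw [ladder_adj]
        simp only [ne_eq, Fin.ext_iff, eq_self_iff_true, true_and, not_true, and_false, or_false,
          eq_iff_iff]
        omega
      rw [Finset.sum_congr rfl (fun j _ => this j), sum_val_eq, if_neg h2, add_zero]
  have hcross : ∀ (s : Fin 2), s ≠ r →
      (∑ j : Fin n, if (ladderGraph n).Adj (r,i) (s,j) then f (s,j) else 0) = f (s, i) := by
    intro s hs
    have : ∀ j : Fin n, (if (ladderGraph n).Adj (r,i) (s,j) then f (s,j) else 0)
        = (if (j:ℕ) = (i:ℕ) then f (s,j) else 0) := by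
      intro j
      congr 1
      rw [ladder_adj]
      have := r.isLt; have := s.isLt; have := i.isLt; have := j.isLt
      have hne : (r:ℕ) ≠ (s:ℕ) := fun h => hs (Fin.ext h.symm)
      simp only [ne_eq, Fin.ext_iff, eq_iff_iff]
      omega
    rw [Finset.sum_congr rfl (fun j _ => this j), sum_val_eq, dif_pos i.isLt]
  have hor : orow r ≠ r := by
    have := r.isLt
    simp only [orow, ne_eq, Fin.ext_iff]
    omega
  rcases (by decide : ∀ x : Fin 2, x = 0 ∨ x = 1) r with rfl | rfl
  · rw [hsame 0 rfl, hcross 1 (by decide)]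
    have : orow 0 = 1 := rfl
    rw [this]
    ring
  · rw [hcross 0 (by decide), hsame 1 rfl]
    have : orow 1 = 0 := rfl
    rw [this]
    ring

/-- total accessor -/
def fat {n : ℕ} (f : Fin 2 × Fin n → ℤ) (r k : ℕ) : ℤ :=
  if h : k < n ∧ r < 2 then f (⟨r, h.2⟩, ⟨k, h.1⟩) else 0

def colOf {n : ℕ} (f : Fin 2 × Fin n → ℤ) (i : ℕ) : ℤ × ℤ := (fat f 0 i, fat f 1 i)

def prevOf {n : ℕ} (f : Fin 2 × Fin n → ℤ) (i : ℕ) : ℤ × ℤ :=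
  if i = 0 then (0,0) else colOf f (i-1)

lemma fat_eq {n : ℕ} (f : Fin 2 × Fin n → ℤ) (r : Fin 2) (i : Fin n) :
    f (r, i) = fat f r.val i.val := by
  rw [fat, dif_pos ⟨i.isLt, r.isLt⟩]

lemma fat_big {n : ℕ} (f : Fin 2 × Fin n → ℤ) (r k : ℕ) (h : ¬ k < n) : fat f r k = 0 := by
  rw [fat, dif_neg]; tauto

lemma nbrSum' {n : ℕ} (f : Fin 2 × Fin n → ℤ) (r : Fin 2) (i : Fin n) :
    ∑ v ∈ Finset.univ.filter ((ladderGraph n).Adj (r,i)), f v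
      = fat f (1 - r.val) i.val + fat f r.val (i.val + 1)
        + (if 0 < i.val then fat f r.val (i.val - 1) else 0) := by
  rw [nbrSum]
  congr 1
  · congr 1
    · exact (fat_eq f (orow r) i).trans rfl
    · by_cases h : (i:ℕ)+1 < n
      · rw [dif_pos h]
        exact (fat_eq f r ⟨(i:ℕ)+1, h⟩).trans rfl
      · rw [dif_neg h, fat_big _ _ _ h]
  · by_cases h : 0 < (i:ℕ)
    · rw [if_pos h, if_pos h]
      exact (fat_eq f r ⟨(i:ℕ)-1, lt_of_le_of_lt (Nat.sub_le _ _) i.isLt⟩).trans rfl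
    · rw [if_neg h, if_neg h]

lemma prevOf_fst {n : ℕ} (f : Fin 2 × Fin n → ℤ) (i : ℕ) :
    (prevOf f i).1 = if 0 < i then fat f 0 (i-1) else 0 := by
  by_cases h : i = 0
  · simp [prevOf, h]
  · rw [prevOf, if_neg h, if_pos (by omega)]; rfl

lemma prevOf_snd {n : ℕ} (f : Fin 2 × Fin n → ℤ) (i : ℕ) :
    (prevOf f i).2 = if 0 < i then fat f 1 (i-1) else 0 := by
  by_cases h : i = 0
  · simp [prevOf, h]
  · rw [prevOf, if_neg h, if_pos (by omega)]; rfl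

lemma srdf_iff {n : ℕ} (f : Fin 2 × Fin n → ℤ) :
    IsSRDF (ladderGraph n) f ↔
    ((∀ v, f v = -1 ∨ f v = 1 ∨ f v = 2) ∧
     ∀ i < n, Ok3 (prevOf f i) (colOf f i) (colOf f (i+1))) := by
  constructor
  · rintro ⟨hval, hsum, hrom⟩
    refine ⟨hval, fun i hi => ?_⟩
    have h0 := hsum (0, ⟨i, hi⟩)
    have h1 := hsum (1, ⟨i, hi⟩)
    rw [nbrSum'] at h0 h1
    rw [fat_eq f 0 ⟨i,hi⟩] at h0
    rw [fat_eq f 1 ⟨i,hi⟩] at h1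
    simp only [Fin.val_zero, Fin.val_one, Fin.val_mk] at h0 h1
    norm_num at h0 h1
    refine ⟨?_, ?_, ?_, ?_⟩
    · show 1 ≤ fat f 0 i + fat f 1 i + (prevOf f i).1 + fat f 0 (i+1)
      rw [prevOf_fst]
      split at h0 <;> split <;> omega
    · show 1 ≤ fat f 0 i + fat f 1 i + (prevOf f i).2 + fat f 1 (i+1)
      rw [prevOf_snd]
      split at h1 <;> split <;> omega
    · show fat f 0 i = -1 → (prevOf f i).1 = 2 ∨ fat f 0 (i+1) = 2 ∨ fat f 1 i = 2
      intro hm1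
      rw [prevOf_fst]
      rw [show fat f 0 i = f (0, ⟨i, hi⟩) from (fat_eq f 0 ⟨i,hi⟩).symm] at hm1
      obtain ⟨⟨a, j⟩, hadj, h2⟩ := hrom (0, ⟨i, hi⟩) hm1
      rw [ladder_adj] at hadj
      rw [fat_eq f a j] at h2
      rcases hadj with ⟨rfl, hj | hj⟩ | ⟨hij, hne⟩
      · right; left
        simp only [Fin.val_mk] at hj
        rwa [Fin.val_zero, ← hj] at h2
      · left
        simp only [Fin.val_mk] at hj
        rw [if_pos (by omega)]
        rw [Fin.val_zero] at h2
        rw [show i - 1 = (j:ℕ) by omega]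
        exact h2
      · right; right
        have ha : (a:ℕ) = 1 := by
          have := a.isLt
          have : ¬ (a:ℕ) = 0 := fun hc => hne (by simpa using (Fin.ext (by simpa using hc) : _).symm)
          omega
        rw [ha] at h2
        have hji : (j:ℕ) = i := by rw [← hij]
        rwa [hji] at h2
    · show fat f 1 i = -1 → (prevOf f i).2 = 2 ∨ fat f 1 (i+1) = 2 ∨ fat f 0 i = 2
      intro hm1
      rw [prevOf_snd]
      rw [show fat f 1 i = f (1, ⟨i, hi⟩) from (fat_eq f 1 ⟨i,hi⟩).symm] at hm1
      obtain ⟨⟨a, j⟩, hadj, h2⟩ := hrom (1, ⟨i, hi⟩) hm1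
      rw [ladder_adj] at hadj
      rw [fat_eq f a j] at h2
      rcases hadj with ⟨rfl, hj | hj⟩ | ⟨hij, hne⟩
      · right; left
        simp only [Fin.val_mk] at hj
        rwa [Fin.val_one, ← hj] at h2
      · left
        simp only [Fin.val_mk] at hj
        rw [if_pos (by omega)]
        rw [Fin.val_one] at h2
        rw [show i - 1 = (j:ℕ) by omega]
        exact h2
      · right; right
        have ha : (a:ℕ) = 0 := by
          have := a.isLt
          have : ¬ (a:ℕ) = 1 := fun hc => hne (by simpa using (Fin.ext (by simpa using hc) : _).symm)
          omega
        rw [ha] at h2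
        have hji : (j:ℕ) = i := by rw [← hij]
        rwa [hji] at h2
  · rintro ⟨hval, hok⟩
    refine ⟨hval, ?_, ?_⟩
    · rintro ⟨r, i⟩
      have hi := i.isLt
      obtain ⟨hA, hB, _, _⟩ := hok i.val hi
      simp only [colOf] at hA hB
      rw [prevOf_fst] at hA
      rw [prevOf_snd] at hB
      rw [nbrSum', fat_eq f r i]
      rcases (by decide : ∀ x : Fin 2, x = 0 ∨ x = 1) r with rfl | rfl
      · simp only [Fin.val_zero, Fin.val_one] at *
        norm_num
        split at hA <;> split <;> omega
      · simp only [Fin.val_zero, Fin.val_one] at *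
        norm_num
        split at hB <;> split <;> omega
    · rintro ⟨r, i⟩ hm1
      have hi := i.isLt
      obtain ⟨_, _, hR1, hR2⟩ := hok i.val hi
      simp only [colOf] at hR1 hR2
      rw [fat_eq f r i] at hm1
      rcases (by decide : ∀ x : Fin 2, x = 0 ∨ x = 1) r with rfl | rfl
      · have hcol := hR1 (by simpa using hm1)
        rw [prevOf_fst] at hcol
        rcases hcol with h | h | h
        · have h0i : 0 < i.val := by by_contra hc; rw [if_neg hc] at h; omega
          rw [if_pos h0i] at h
          refine ⟨(0, ⟨i.val - 1, by omega⟩), ?_, ?_⟩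
          · rw [ladder_adj]
            left
            refine ⟨rfl, Or.inr ?_⟩
            simp only [Fin.val_mk]
            omega
          · have e := fat_eq f 0 ⟨i.val - 1, by omega⟩
            simp only [Fin.val_zero, Fin.val_mk] at e
            rw [e]; exact h
        · have hlt : i.val + 1 < n := by by_contra hc; rw [fat_big f 0 _ hc] at h; omega
          refine ⟨(0, ⟨i.val + 1, hlt⟩), ?_, ?_⟩
          · rw [ladder_adj]
            left
            exact ⟨rfl, Or.inl (by simp)⟩
          · have e := fat_eq f 0 ⟨i.val + 1, hlt⟩
            simp only [Fin.val_zero, Fin.val_mk] at e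
            rw [e]; exact h
        · refine ⟨(1, i), ?_, ?_⟩
          · rw [ladder_adj]; right; exact ⟨rfl, by decide⟩
          · have e := fat_eq f 1 i
            simp only [Fin.val_one] at e
            rw [e]; exact h
      · have hcol := hR2 (by simpa using hm1)
        rw [prevOf_snd] at hcol
        rcases hcol with h | h | h
        · have h0i : 0 < i.val := by by_contra hc; rw [if_neg hc] at h; omega
          rw [if_pos h0i] at h
          refine ⟨(1, ⟨i.val - 1, by omega⟩), ?_, ?_⟩
          · rw [ladder_adj]
            left
            refine ⟨rfl, Or.inr ?_⟩
            simp only [Fin.val_mk]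
            omega
          · have e := fat_eq f 1 ⟨i.val - 1, by omega⟩
            simp only [Fin.val_one, Fin.val_mk] at e
            rw [e]; exact h
        · have hlt : i.val + 1 < n := by by_contra hc; rw [fat_big f 1 _ hc] at h; omega
          refine ⟨(1, ⟨i.val + 1, hlt⟩), ?_, ?_⟩
          · rw [ladder_adj]
            left
            exact ⟨rfl, Or.inl (by simp)⟩
          · have e := fat_eq f 1 ⟨i.val + 1, hlt⟩
            simp only [Fin.val_one, Fin.val_mk] at e
            rw [e]; exact h
        · refine ⟨(0, i), ?_, ?_⟩
          · rw [ladder_adj]; right; exact ⟨rfl, by decide⟩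
          · have e := fat_eq f 0 i
            simp only [Fin.val_zero] at e
            rw [e]; exact h

def fu (n i : ℕ) : ℤ × ℤ :=
  if i = 0 then (-1, 1)
  else if i = n - 1 then
    (if (i-1) % 4 = 0 then (2,1)
     else if (i-1) % 4 = 1 then (-1,1)
     else if (i-1) % 4 = 2 then (1,2)
     else (1,-1))
  else (if (i-1) % 4 = 0 then (2,1)
     else if (i-1) % 4 = 1 then (-1,-1)
     else if (i-1) % 4 = 2 then (1,2)
     else (-1,-1))

lemma fu_vals (n i : ℕ) : ((fu n i).1 = -1 ∨ (fu n i).1 = 1 ∨ (fu n i).1 = 2) ∧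
    ((fu n i).2 = -1 ∨ (fu n i).2 = 1 ∨ (fu n i).2 = 2) := by
  unfold fu; split_ifs <;> norm_num

lemma fu_one (n : ℕ) (hn : 2 ≤ n) : fu n 1 = (2, 1) := by
  unfold fu
  split_ifs <;> first | rfl | omega | exact False.elim ‹False›

lemma fu_ok (n : ℕ) (hn : 2 ≤ n) : ∀ i < n,
    Ok3 (if i = 0 then (0,0) else fu n (i-1)) (fu n i) (if i+1 < n then fu n (i+1) else (0,0)) := by
  intro i hi
  by_cases h0 : i = 0
  · subst h0
    rw [if_pos rfl, if_pos (by omega : 0 + 1 < n), fu_one n hn]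
    have hcur : fu n 0 = (-1, 1) := rfl
    rw [hcur]
    exact ⟨by norm_num, by norm_num, fun _ => by norm_num, fun h => by norm_num at h⟩
  · rw [if_neg h0]
    have h1 : 1 ≤ i := by omega
    by_cases hl : i = n - 1
    · rw [if_neg (show ¬ i + 1 < n by omega)]
      have hcur : fu n i = (if (i-1)%4 = 0 then ((2:ℤ),(1:ℤ)) else if (i-1)%4 = 1 then (-1,1)
          else if (i-1)%4 = 2 then (1,2) else (1,-1)) := by
        unfold fu; rw [if_neg h0, if_pos hl]
      by_cases hi1 : i - 1 = 0
      · have hprev : fu n (i-1) = (-1,1) := by rw [hi1]; rfl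
        have hm : (i-1) % 4 = 0 := by omega
        rw [hcur, hprev, hm]
        decide
      · have hprev : fu n (i-1) = (if (i-1-1)%4 = 0 then ((2:ℤ),(1:ℤ)) else if (i-1-1)%4 = 1 then (-1,-1)
            else if (i-1-1)%4 = 2 then (1,2) else (-1,-1)) := by
          unfold fu; rw [if_neg hi1, if_neg (show ¬ i - 1 = n - 1 by omega)]
        rw [hcur, hprev]
        have h4 : (i-1)%4 = 0 ∧ (i-1-1)%4 = 3 ∨ (i-1)%4 = 1 ∧ (i-1-1)%4 = 0 ∨
            (i-1)%4 = 2 ∧ (i-1-1)%4 = 1 ∨ (i-1)%4 = 3 ∧ (i-1-1)%4 = 2 := by omega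
        rcases h4 with ⟨ha,hb⟩|⟨ha,hb⟩|⟨ha,hb⟩|⟨ha,hb⟩ <;> rw [ha, hb] <;> decide
    · have hcur : fu n i = (if (i-1)%4 = 0 then ((2:ℤ),(1:ℤ)) else if (i-1)%4 = 1 then (-1,-1)
          else if (i-1)%4 = 2 then (1,2) else (-1,-1)) := by
        unfold fu; rw [if_neg h0, if_neg hl]
      rw [if_pos (show i + 1 < n by omega)]
      have hnext : fu n (i+1) = (if i + 1 = n - 1 then
          (if i%4 = 0 then ((2:ℤ),(1:ℤ)) else if i%4 = 1 then (-1,1) else if i%4 = 2 then (1,2) else (1,-1))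
          else (if i%4 = 0 then (2,1) else if i%4 = 1 then (-1,-1) else if i%4 = 2 then (1,2) else (-1,-1))) := by
        unfold fu
        rw [if_neg (show ¬ i + 1 = 0 by omega), show i + 1 - 1 = i from by omega]
      by_cases hi1 : i - 1 = 0
      · have hprev : fu n (i-1) = (-1,1) := by rw [hi1]; rfl
        have hm : (i-1) % 4 = 0 := by omega
        have hm2 : i % 4 = 1 := by omega
        rw [hcur, hprev, hnext, hm, hm2]
        by_cases hb : i + 1 = n - 1
        · rw [if_pos hb]; decide
        · rw [if_neg hb]; decide
      · have hprev : fu n (i-1) = (if (i-1-1)%4 = 0 then ((2:ℤ),(1:ℤ)) else if (i-1-1)%4 = 1 then (-1,-1)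
            else if (i-1-1)%4 = 2 then (1,2) else (-1,-1)) := by
          unfold fu; rw [if_neg hi1, if_neg (show ¬ i - 1 = n - 1 by omega)]
        rw [hcur, hprev, hnext]
        have h4 : (i-1)%4 = 0 ∧ (i-1-1)%4 = 3 ∧ i%4 = 1 ∨ (i-1)%4 = 1 ∧ (i-1-1)%4 = 0 ∧ i%4 = 2 ∨
            (i-1)%4 = 2 ∧ (i-1-1)%4 = 1 ∧ i%4 = 3 ∨ (i-1)%4 = 3 ∧ (i-1-1)%4 = 2 ∧ i%4 = 0 := by omega
        rcases h4 with ⟨ha,hb,hc⟩|⟨ha,hb,hc⟩|⟨ha,hb,hc⟩|⟨ha,hb,hc⟩ <;> rw [ha, hb, hc] <;>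
          (by_cases hx : i + 1 = n - 1
           · rw [if_pos hx]; decide
           · rw [if_neg hx]; decide)

lemma fu_colsum (n : ℕ) (hn : 2 ≤ n) :
    ∑ i ∈ Finset.range n, ((fu n i).1 + (fu n i).2) = ((n / 2 : ℕ) : ℤ) + 2 := by
  induction n, hn using Nat.le_induction with
  | base => norm_num [Finset.sum_range_succ, fu]
  | succ n hn2 ih =>
    obtain ⟨N, rfl⟩ : ∃ N, n = N + 1 := ⟨n - 1, by omega⟩
    have hN : 1 ≤ N := by omega
    rw [Finset.sum_range_succ, Finset.sum_range_succ]
    rw [Finset.sum_range_succ] at ih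
    have e1 : ∀ i ∈ Finset.range N, ((fu (N+1+1) i).1 + (fu (N+1+1) i).2)
        = ((fu (N+1) i).1 + (fu (N+1) i).2) := by
      intro i hi
      rw [Finset.mem_range] at hi
      by_cases h0 : i = 0
      · subst h0; rfl
      · unfold fu
        rw [if_neg h0, if_neg h0, if_neg (show ¬ i = N+1+1-1 by omega),
          if_neg (show ¬ i = N+1-1 by omega)]
    rw [Finset.sum_congr rfl e1]
    have vN : (fu (N+1) N).1 + (fu (N+1) N).2 = if (N-1) % 2 = 0 then 3 else 0 := by
      unfold fu
      rw [if_neg (by omega), if_pos (by omega)]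
      have h4 : (N-1)%4 = 0 ∨ (N-1)%4 = 1 ∨ (N-1)%4 = 2 ∨ (N-1)%4 = 3 := by omega
      rcases h4 with ha|ha|ha|ha <;> rw [ha] <;>
        first
          | (rw [if_pos (by omega : (N-1) % 2 = 0)]; decide)
          | (rw [if_neg (by omega : ¬ (N-1) % 2 = 0)]; decide)
    have vN' : (fu (N+1+1) N).1 + (fu (N+1+1) N).2 = if (N-1) % 2 = 0 then 3 else -2 := by
      unfold fu
      rw [if_neg (by omega), if_neg (by omega)]
      have h4 : (N-1)%4 = 0 ∨ (N-1)%4 = 1 ∨ (N-1)%4 = 2 ∨ (N-1)%4 = 3 := by omega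
      rcases h4 with ha|ha|ha|ha <;> rw [ha] <;>
        first
          | (rw [if_pos (by omega : (N-1) % 2 = 0)]; decide)
          | (rw [if_neg (by omega : ¬ (N-1) % 2 = 0)]; decide)
    have vN1 : (fu (N+1+1) (N+1)).1 + (fu (N+1+1) (N+1)).2 = if N % 2 = 0 then 3 else 0 := by
      unfold fu
      rw [if_neg (by omega), if_pos (by omega), show N+1-1 = N from by omega]
      have h4 : N%4 = 0 ∨ N%4 = 1 ∨ N%4 = 2 ∨ N%4 = 3 := by omega
      rcases h4 with ha|ha|ha|ha <;> rw [ha] <;>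
        first
          | (rw [if_pos (by omega : N % 2 = 0)]; decide)
          | (rw [if_neg (by omega : ¬ N % 2 = 0)]; decide)
    rw [vN] at ih
    rw [vN', vN1]
    by_cases hp : (N-1) % 2 = 0
    · rw [if_pos hp] at ih ⊢
      rw [if_neg (by omega : ¬ N % 2 = 0)]
      push_cast at ih ⊢
      omega
    · rw [if_neg hp] at ih ⊢
      rw [if_pos (by omega : N % 2 = 0)]
      push_cast at ih ⊢
      omega


def fF (n : ℕ) : Fin 2 × Fin n → ℤ := fun v => if v.1 = 0 then (fu n v.2.val).1 else (fu n v.2.val).2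

lemma colOf_fF {n : ℕ} (i : ℕ) (hi : i < n) : colOf (fF n) i = fu n i := by
  unfold colOf fat
  rw [dif_pos ⟨hi, by norm_num⟩, dif_pos ⟨hi, by norm_num⟩]
  simp [fF, Fin.ext_iff]

lemma colOf_big {n : ℕ} (f : Fin 2 × Fin n → ℤ) (k : ℕ) (h : ¬ k < n) : colOf f k = (0,0) := by
  unfold colOf; rw [fat_big _ _ _ h, fat_big _ _ _ h]

lemma sum_cols {n : ℕ} (f : Fin 2 × Fin n → ℤ) :
    ∑ v, f v = ∑ i ∈ Finset.range n, ((colOf f i).1 + (colOf f i).2) := by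
  rw [← Fin.sum_univ_eq_sum_range (fun i => (colOf f i).1 + (colOf f i).2) n]
  rw [Fintype.sum_prod_type_right]
  apply Finset.sum_congr rfl
  intro j _
  rw [Fin.sum_univ_two, fat_eq f 0 j, fat_eq f 1 j]
  norm_num [colOf]

lemma fF_srdf (n : ℕ) (hn : 2 ≤ n) : IsSRDF (ladderGraph n) (fF n) := by
  rw [srdf_iff]
  constructor
  · rintro ⟨r, j⟩
    unfold fF
    by_cases h : r = 0
    · rw [if_pos h]; exact (fu_vals n j.val).1
    · rw [if_neg h]; exact (fu_vals n j.val).2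
  · intro i hi
    have h := fu_ok n hn i hi
    have hprev : prevOf (fF n) i = (if i = 0 then (0,0) else fu n (i-1)) := by
      unfold prevOf
      by_cases h0 : i = 0
      · rw [if_pos h0, if_pos h0]
      · rw [if_neg h0, if_neg h0, colOf_fF _ (by omega)]
    have hnext : colOf (fF n) (i+1) = (if i+1 < n then fu n (i+1) else (0,0)) := by
      by_cases hc : i + 1 < n
      · rw [if_pos hc, colOf_fF _ hc]
      · rw [if_neg hc, colOf_big _ _ hc]
    rw [hprev, hnext, colOf_fF _ hi]
    exact h

lemma fF_weight (n : ℕ) (hn : 2 ≤ n) : ∑ v, fF n v = ((n / 2 : ℕ) : ℤ) + 2 := by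
  rw [sum_cols]
  rw [Finset.sum_congr rfl (fun i hi => by rw [colOf_fF _ (Finset.mem_range.mp hi)])]
  exact fu_colsum n hn

lemma lower_bound (n : ℕ) (hn : 2 ≤ n) (f : Fin 2 × Fin n → ℤ)
    (hf : IsSRDF (ladderGraph n) f) : ((n / 2 : ℕ) : ℤ) + 2 ≤ ∑ v, f v := by
  rw [srdf_iff] at hf
  obtain ⟨hval, hok⟩ := hf
  have hmem : ∀ i < n, colOf f i ∈ colsL := by
    intro i hi
    have h0 := hval (0, ⟨i, hi⟩)
    have h1 := hval (1, ⟨i, hi⟩)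
    rw [fat_eq f 0 ⟨i,hi⟩] at h0
    rw [fat_eq f 1 ⟨i,hi⟩] at h1
    simp only [Fin.val_zero, Fin.val_one, Fin.val_mk] at h0 h1
    unfold colOf colsL
    rcases h0 with h|h|h <;> rcases h1 with h'|h'|h' <;> rw [h, h'] <;> simp
  have hok' : ∀ i, i + 1 < n →
      Ok3 (if i = 0 then (0,0) else colOf f (i-1)) (colOf f i) (colOf f (i+1)) := by
    intro i hlt
    have h := hok i (by omega)
    have e : prevOf f i = (if i = 0 then (0,0) else colOf f (i-1)) := rfl
    rwa [e] at h
  have hlb := lb_aux (colOf f) n (by omega) hmem hok'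
  rw [if_neg (by omega : ¬ n - 1 = 0)] at hlb
  have hfin := hok (n-1) (by omega)
  have e2 : prevOf f (n-1) = colOf f (n-2) := by
    unfold prevOf
    rw [if_neg (by omega), show n-1-1 = n-2 from by omega]
  have e3 : colOf f ((n-1)+1) = (0,0) := by
    rw [show n-1+1 = n from by omega]
    exact colOf_big f n (by omega)
  rw [e2, e3] at hfin
  have hK := condC _ (hmem (n-2) (by omega)) _ (hmem (n-1) (by omega)) hfin
  have hs := sum_cols f
  omega


theorem stmt8 (n : ℕ) (hn : 2 ≤ n) :
    gammaSR (ladderGraph n) = ((n + 2) / 2 : ℕ) + 1 := by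
  have heq : (((n + 2) / 2 : ℕ) : ℤ) + 1 = ((n / 2 : ℕ) : ℤ) + 2 := by
    have : (n + 2) / 2 = n / 2 + 1 := by omega
    rw [this]; push_cast; ring
  have hmem : (((n + 2) / 2 : ℕ) : ℤ) + 1 ∈
      {w | ∃ f, IsSRDF (ladderGraph n) f ∧ ∑ v, f v = w} := by
    exact ⟨fF n, fF_srdf n hn, by rw [fF_weight n hn, heq]⟩
  have hlow : ∀ w ∈ {w | ∃ f, IsSRDF (ladderGraph n) f ∧ ∑ v, f v = w},
      (((n + 2) / 2 : ℕ) : ℤ) + 1 ≤ w := by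
    rintro w ⟨f, hf, rfl⟩
    rw [heq]
    exact lower_bound n hn f hf
  unfold gammaSR
  apply le_antisymm
  · exact csInf_le ⟨_, hlow⟩ hmem
  · exact le_csInf ⟨_, hmem⟩ hlow
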